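/- Let [η_min, η_max] ⊂ (0, 1/2) be a fixed compact interval. Let (m_k) be a sequence of voter numbers with m_k → ∞, let (n_k) be an arbitrary sequence of even candidate numbers with n_k ≥ 6, and let (l_k) be integers with 2 ≤ l_k < n_k/2 such that l_k/n_k ∈ [η_min, η_max] for all k. Then, in the discrete two-round voting model, lim_{k→∞} p_1(n_k, m_k, l_k) = 1. -/

import Mathlib

set_option maxHeartbeats 1000000


open Finset Filter MeasureTheory

namespace TwoRound

/-- Candidate at position `r` (0-indexed) in the clockwise preference list
`(s, s+1, …, n, 1, …, s−1)` of the voter with seed `s ∈ {1,…,n}`. -/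
def prefAt (n s r : ℕ) : ℕ := (s - 1 + r) % n + 1

/-- The candidate of `S` that the voter with seed `s` votes for: the first element of the
clockwise preference list of `s` that belongs to `S`. -/
noncomputable def voteOf (n : ℕ) (S : Finset ℕ) (s : ℕ) : ℕ :=
  haveI : Decidable (∃ r, prefAt n s r ∈ S) := Classical.dec _
  if h : ∃ r, prefAt n s r ∈ S then prefAt n s (Nat.find h) else 0

/-- `Xi n S i s` : the number of votes cast for candidate `i` in an election among the
candidates of `S`, when the voters have seeds `s 0, …, s (m-1)`. -/
noncomputable def Xi (n : ℕ) {m : ℕ} (S : Finset ℕ) (i : ℕ) (s : Fin m → ℕ) : ℕ :=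
  haveI := Classical.decPred fun j : Fin m => voteOf n S (s j) = i
  (Finset.univ.filter fun j : Fin m => voteOf n S (s j) = i).card

/-- The seeds (valued in `{1,…,n}`) associated with a sample point `σ : Fin m → Fin n`. -/
def seed {m n : ℕ} (σ : Fin m → Fin n) (j : Fin m) : ℕ := (σ j : ℕ) + 1

/-- Probability of an event when the `m` voters choose their seeds independently and
uniformly at random on `{1,…,n}`. -/
noncomputable def Pr (n m : ℕ) (E : (Fin m → Fin n) → Prop) : ℝ :=
  haveI := Classical.decPred E
  ((Finset.univ.filter E).card : ℝ) / (n : ℝ) ^ m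

/-- The set `A = {1,…,l} ∪ {l+2i : 1 ≤ i ≤ (n−2l)/2}`. -/
def Acl (n l : ℕ) : Finset ℕ :=
  Finset.Icc 1 l ∪ (Finset.Icc 1 ((n - 2 * l) / 2)).image fun i => l + 2 * i

/-- The set `B = {1,…,n} \ A`. -/
def Bcl (n l : ℕ) : Finset ℕ := Finset.Icc 1 n \ Acl n l

/-- Candidate `1` wins the two-round election: `1` strictly uniquely maximizes `Ξ_A` over `A`,
some `w` strictly uniquely maximizes `Ξ_B` over `B`, and `1` strictly beats `w` head-to-head. -/
def Wins1 (n l : ℕ) {m : ℕ} (σ : Fin m → Fin n) : Prop :=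
  (∀ i ∈ Acl n l, i ≠ 1 → Xi n (Acl n l) i (seed σ) < Xi n (Acl n l) 1 (seed σ)) ∧
  ∃ w ∈ Bcl n l,
    (∀ i ∈ Bcl n l, i ≠ w → Xi n (Bcl n l) i (seed σ) < Xi n (Bcl n l) w (seed σ)) ∧
    Xi n {1, w} w (seed σ) < Xi n {1, w} 1 (seed σ)

/-- `p₁(n, m, l)` : the probability that candidate 1 wins the two-round election. -/
noncomputable def p1 (n m l : ℕ) : ℝ := Pr n m (Wins1 n l)


/-- clockwise distance from seed `x+1` to candidate `c` (for `x < n`, `1 ≤ c ≤ n`). -/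
def dst (n x c : ℕ) : ℕ := if x + 1 ≤ c then c - (x + 1) else c + n - (x + 1)

lemma dst_lt {n x c : ℕ} (hx : x < n) (hc1 : 1 ≤ c) (hcn : c ≤ n) : dst n x c < n := by
  unfold dst; split <;> omega

lemma prefAt_dst {n x c : ℕ} (hx : x < n) (hc1 : 1 ≤ c) (hcn : c ≤ n) :
    (x + dst n x c) % n + 1 = c := by
  unfold dst; split
  · rw [Nat.mod_eq_of_lt (by omega)]; omega
  · have h1 : x + (c + n - (x + 1)) = n + (c - 1) := by omega
    rw [h1, Nat.add_mod_left, Nat.mod_eq_of_lt (by omega)]; omega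

lemma dst_unique {n x c r : ℕ} (hx : x < n) (hr : r < n) (h : (x + r) % n + 1 = c) :
    r = dst n x c := by
  unfold dst
  rcases lt_or_ge (x + r) n with hlt | hge
  · rw [Nat.mod_eq_of_lt hlt] at h; split <;> omega
  · have h2 : (x + r) % n = x + r - n := by
      rw [Nat.mod_eq_sub_mod hge, Nat.mod_eq_of_lt (by omega)]
    rw [h2] at h; split <;> omega

lemma vote_eq_of {n x d : ℕ} {S : Finset ℕ} (hx : x < n)
    (hd : (x + d) % n + 1 ∈ S) (hmin : ∀ r < d, (x + r) % n + 1 ∉ S) :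
    voteOf n S (x + 1) = (x + d) % n + 1 := by
  have hpre : ∀ r, prefAt n (x + 1) r = (x + r) % n + 1 := by
    intro r; unfold prefAt; rw [Nat.add_sub_cancel]
  unfold voteOf
  have hex : ∃ r, prefAt n (x + 1) r ∈ S := ⟨d, by rw [hpre]; exact hd⟩
  rw [dif_pos hex]
  have hfind : Nat.find hex = d := by
    rw [Nat.find_eq_iff]
    exact ⟨by rw [hpre]; exact hd, fun r hr => by rw [hpre]; exact hmin r hr⟩
  rw [hfind, hpre]

lemma vote_imp {n x c c' : ℕ} {S : Finset ℕ} (hx : x < n)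
    (h : voteOf n S (x + 1) = c) (hc'S : c' ∈ S) (h1 : 1 ≤ c') (h2 : c' ≤ n) :
    dst n x c ≤ dst n x c' ∧ 1 ≤ c ∧ c ≤ n := by
  have hn : 0 < n := by omega
  have hpre : ∀ r, prefAt n (x + 1) r = (x + r) % n + 1 := by
    intro r; unfold prefAt; rw [Nat.add_sub_cancel]
  unfold voteOf at h
  have hex : ∃ r, prefAt n (x + 1) r ∈ S :=
    ⟨dst n x c', by rw [hpre, prefAt_dst hx h1 h2]; exact hc'S⟩
  rw [dif_pos hex] at h
  have hle : Nat.find hex ≤ dst n x c' :=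
    Nat.find_le (by rw [hpre, prefAt_dst hx h1 h2]; exact hc'S)
  have hfn : Nat.find hex < n := lt_of_le_of_lt hle (dst_lt hx h1 h2)
  rw [hpre] at h
  have hc : 1 ≤ c ∧ c ≤ n := by
    constructor
    · omega
    · have := Nat.mod_lt (x + Nat.find hex) hn; omega
  have := dst_unique hx hfn h
  exact ⟨this ▸ hle, hc.1, hc.2⟩


/-- cyclic gap from `c'` forward to `c`. -/
def gapv (n c' c : ℕ) : ℕ := if c' ≤ c then c - c' else c + n - c'

def bck (n c t : ℕ) : ℕ := if t < c then c - t else c + n - t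

lemma card_votes_le {n c c' : ℕ} {S : Finset ℕ} (hn : 0 < n)
    (hc'S : c' ∈ S) (h1 : 1 ≤ c') (h2 : c' ≤ n) (hne : c' ≠ c) :
    (Finset.univ.filter fun x : Fin n => voteOf n S ((x : ℕ) + 1) = c).card ≤ gapv n c' c := by
  have := Finset.card_le_card_of_injOn (f := fun x : Fin n => dst n (x : ℕ) c)
    (s := Finset.univ.filter fun x : Fin n => voteOf n S ((x : ℕ) + 1) = c)
    (t := Finset.range (gapv n c' c)) ?_ ?_
  · simpa using this
  · intro x hx
    have hv : voteOf n S ((x : ℕ) + 1) = c := (Finset.mem_filter.1 hx).2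
    obtain ⟨hle, hcc1, hccn⟩ := vote_imp x.2 hv hc'S h1 h2
    have hne2 : dst n (x : ℕ) c ≠ dst n (x : ℕ) c' := by
      intro he
      apply hne
      have e1 := prefAt_dst (c := c) x.2 hcc1 hccn
      have e2 := prefAt_dst (c := c') x.2 h1 h2
      rw [← he] at e2; omega
    have hlt : dst n (x : ℕ) c < dst n (x : ℕ) c' := lt_of_le_of_ne hle hne2
    have hx2 := x.2
    rw [Finset.mem_coe, Finset.mem_range]
    clear hle hne2 hv hx
    simp only [dst, gapv] at hlt ⊢
    split_ifs at hlt ⊢ <;> omega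
  · intro x hx y hy hxy
    have hx2 := x.2; have hy2 := y.2
    simp only [dst] at hxy
    have : (x : ℕ) = (y : ℕ) := by split_ifs at hxy <;> omega
    exact Fin.ext this

lemma le_card_votes {n c g : ℕ} {S : Finset ℕ} (hn : 0 < n)
    (hc1 : 1 ≤ c) (hcn : c ≤ n) (hcS : c ∈ S) (hg : g ≤ n)
    (hblock : ∀ t, 1 ≤ t → t < g → bck n c t ∉ S) :
    g ≤ (Finset.univ.filter fun x : Fin n => voteOf n S ((x : ℕ) + 1) = c).card := by
  have hbck : ∀ j < n, 1 ≤ bck n c j ∧ bck n c j ≤ n := by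
    intro j hj; unfold bck; split <;> omega
  have hb0 : bck n c 0 = c := by unfold bck; rw [if_pos (by omega)]; omega
  have key : ∀ j < g, voteOf n S (bck n c j - 1 + 1) = c := by
    intro j hj
    have hb := hbck j (by omega)
    have hmodeq : ∀ r ≤ j, (bck n c j - 1 + r) % n + 1 = bck n c (j - r) := by
      intro r hr
      rcases lt_or_ge j c with h | h
      · have : bck n c j - 1 + r = c - (j - r) - 1 := by unfold bck; split <;> omega
        rw [this, Nat.mod_eq_of_lt (by omega)]
        unfold bck; split <;> omega
      · rcases lt_or_ge (j - r) c with h' | h'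
        · have : bck n c j - 1 + r = n + (c - (j - r) - 1) := by unfold bck; split <;> omega
          rw [this, Nat.add_mod_left, Nat.mod_eq_of_lt (by omega)]
          unfold bck; split <;> omega
        · have : bck n c j - 1 + r = c + n - (j - r) - 1 := by unfold bck; split <;> omega
          rw [this, Nat.mod_eq_of_lt (by omega)]
          unfold bck; split <;> omega
    have hd : (bck n c j - 1 + j) % n + 1 ∈ S := by
      rw [hmodeq j le_rfl]; simp only [Nat.sub_self, hb0]; exact hcS
    have hmin : ∀ r < j, (bck n c j - 1 + r) % n + 1 ∉ S := by
      intro r hr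
      rw [hmodeq r (by omega)]
      exact hblock (j - r) (by omega) (by omega)
    have hv := vote_eq_of (x := bck n c j - 1) (S := S) (by omega) hd hmin
    rw [hv, hmodeq j le_rfl, Nat.sub_self, hb0]
  have := Finset.card_le_card_of_injOn
    (f := fun j => (⟨(bck n c j - 1) % n, Nat.mod_lt _ hn⟩ : Fin n))
    (s := Finset.range g)
    (t := Finset.univ.filter fun x : Fin n => voteOf n S ((x : ℕ) + 1) = c) ?_ ?_
  · simpa using this
  · intro j hj
    rw [Finset.mem_coe, Finset.mem_range] at hj
    have hb := hbck j (by omega)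
    rw [Finset.mem_coe]
    refine Finset.mem_filter.2 ⟨Finset.mem_univ _, ?_⟩
    simp only [Nat.mod_eq_of_lt (show bck n c j - 1 < n by omega)]
    exact key j hj
  · intro i hi j hj hij
    rw [Finset.mem_coe, Finset.mem_range] at hi hj
    have hbi := hbck i (by omega); have hbj := hbck j (by omega)
    have : (bck n c i - 1) % n = (bck n c j - 1) % n := congrArg Fin.val hij
    rw [Nat.mod_eq_of_lt (by omega), Nat.mod_eq_of_lt (by omega)] at this
    unfold bck at this; split_ifs at this <;> omega

def cnt {n : ℕ} (m : ℕ) (T : Finset (Fin n)) (σ : Fin m → Fin n) : ℕ :=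
  (Finset.univ.filter fun j => σ j ∈ T).card

/-- the set of seeds voting for `i` in election `S`. -/
noncomputable def Tst (n : ℕ) (S : Finset ℕ) (i : ℕ) : Finset (Fin n) :=
  Finset.univ.filter fun x : Fin n => voteOf n S ((x : ℕ) + 1) = i

lemma Xi_eq_cnt {n m : ℕ} (S : Finset ℕ) (i : ℕ) (σ : Fin m → Fin n) :
    Xi n S i (seed σ) = cnt m (Tst n S i) σ := by
  unfold Xi cnt seed
  congr 1
  ext j
  simp [Tst, Finset.mem_filter]

lemma Pr_nonneg {n m : ℕ} (E : (Fin m → Fin n) → Prop) : 0 ≤ Pr n m E := by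
  unfold Pr; positivity

lemma card_univ_fn {n m : ℕ} : ((Finset.univ : Finset (Fin m → Fin n)).card : ℝ) = (n : ℝ) ^ m := by
  simp [Fintype.card_fun]

lemma Pr_le_one {n m : ℕ} (hn : 0 < n) (E : (Fin m → Fin n) → Prop) : Pr n m E ≤ 1 := by
  classical
  unfold Pr
  rw [div_le_one (by positivity)]
  rw [← card_univ_fn (n := n) (m := m)]
  exact_mod_cast Finset.card_filter_le _ _

lemma Pr_compl {n m : ℕ} (hn : 0 < n) (E : (Fin m → Fin n) → Prop) :
    Pr n m E + Pr n m (fun σ => ¬ E σ) = 1 := by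
  classical
  unfold Pr
  rw [← add_div, div_eq_one_iff_eq (by positivity)]
  rw [← card_univ_fn (n := n) (m := m)]
  have h := @Finset.card_filter_add_card_filter_not _ (s := Finset.univ) E
    (Classical.decPred E) (fun x => Classical.dec _)
  exact_mod_cast h

lemma Pr_mono {n m : ℕ} (hn : 0 < n) {E F : (Fin m → Fin n) → Prop} (h : ∀ σ, E σ → F σ) :
    Pr n m E ≤ Pr n m F := by
  classical
  unfold Pr
  gcongr
  apply h

lemma Pr_or {n m : ℕ} (hn : 0 < n) (E F G : (Fin m → Fin n) → Prop)
    (h : ∀ σ, E σ → F σ ∨ G σ) : Pr n m E ≤ Pr n m F + Pr n m G := by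
  classical
  unfold Pr
  rw [← add_div]
  gcongr
  calc ((Finset.univ.filter E).card : ℝ)
      ≤ ((Finset.univ.filter F ∪ Finset.univ.filter G).card : ℝ) := by
        exact_mod_cast Finset.card_le_card (fun σ hσ => by
          simp only [Finset.mem_filter, Finset.mem_union] at hσ ⊢
          rcases h σ hσ.2 with h' | h'
          · exact Or.inl ⟨hσ.1, h'⟩
          · exact Or.inr ⟨hσ.1, h'⟩)
    _ ≤ _ := by exact_mod_cast Finset.card_union_le _ _

lemma Pr_biUnion {n m : ℕ} (hn : 0 < n) (s : Finset ℕ) (E : ℕ → (Fin m → Fin n) → Prop) :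
    Pr n m (fun σ => ∃ i ∈ s, E i σ) ≤ ∑ i ∈ s, Pr n m (E i) := by
  classical
  unfold Pr
  rw [← Finset.sum_div]
  gcongr
  have h1 : (@Finset.filter _ (fun σ : Fin m → Fin n => ∃ i ∈ s, E i σ)
      (Classical.decPred _) Finset.univ).card
      ≤ ∑ i ∈ s, (Finset.univ.filter (E i)).card :=
    le_trans (Finset.card_le_card (fun σ hσ => by
        simp only [Finset.mem_filter, Finset.mem_biUnion] at hσ ⊢
        obtain ⟨i, hi, hEi⟩ := hσ.2
        exact ⟨i, hi, hσ.1, hEi⟩)) Finset.card_biUnion_le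
  exact_mod_cast h1

lemma sum_prod_w {n m : ℕ} (w : Fin n → ℝ) :
    ∑ σ : Fin m → Fin n, ∏ j, w (σ j) = (∑ x, w x) ^ m := by
  rw [Finset.sum_pow' Finset.univ w m]
  rw [Fintype.piFinset_univ]

lemma markov {n m : ℕ} (hn : 0 < n) (w : Fin n → ℝ) (hw : ∀ x, 0 ≤ w x)
    (E : (Fin m → Fin n) → Prop) (ε : ℝ) (hε : 0 < ε)
    (h : ∀ σ, E σ → ε ≤ ∏ j, w (σ j)) :
    Pr n m E ≤ ((∑ x, w x) / n) ^ m / ε := by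
  classical
  unfold Pr
  have key : ε * ((Finset.univ.filter E).card : ℝ) ≤ (∑ x, w x) ^ m := by
    calc ε * ((Finset.univ.filter E).card : ℝ)
        = ∑ _σ ∈ Finset.univ.filter E, ε := by rw [Finset.sum_const, nsmul_eq_mul]; ring
      _ ≤ ∑ σ ∈ Finset.univ.filter E, ∏ j, w (σ j) :=
          Finset.sum_le_sum (fun σ hσ => h σ (Finset.mem_filter.1 hσ).2)
      _ ≤ ∑ σ : Fin m → Fin n, ∏ j, w (σ j) :=
          Finset.sum_le_sum_of_subset_of_nonneg (Finset.filter_subset _ _)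
            (fun σ _ _ => Finset.prod_nonneg (fun j _ => hw (σ j)))
      _ = (∑ x, w x) ^ m := sum_prod_w w
  have hnm : (0:ℝ) < (n : ℝ) ^ m := by positivity
  rw [div_pow, div_div, div_le_div_iff₀ hnm (by positivity)]
  calc ((Finset.univ.filter E).card : ℝ) * ((n:ℝ)^m * ε)
      = (ε * ((Finset.univ.filter E).card : ℝ)) * (n:ℝ)^m := by ring
    _ ≤ (∑ x, w x) ^ m * (n:ℝ)^m := mul_le_mul_of_nonneg_right key (le_of_lt hnm)

lemma prod_w {n m : ℕ} (T : Finset (Fin n)) (t : ℝ) (σ : Fin m → Fin n) :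
    ∏ j, (if σ j ∈ T then t else 1) = t ^ cnt m T σ := by
  rw [cnt, ← Finset.prod_filter_mul_prod_filter_not Finset.univ (fun j => σ j ∈ T)]
  rw [Finset.prod_congr rfl (fun j hj => if_pos (Finset.mem_filter.1 hj).2),
      Finset.prod_congr rfl (fun j hj => if_neg (Finset.mem_filter.1 hj).2),
      Finset.prod_const, Finset.prod_const, one_pow, mul_one]

lemma sum_w {n : ℕ} (T : Finset (Fin n)) (t : ℝ) :
    ∑ x : Fin n, (if x ∈ T then t else 1) = n + (t - 1) * T.card := by
  have : ∀ x : Fin n, (if x ∈ T then t else 1) = 1 + (if x ∈ T then t - 1 else 0) := by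
    intro x; split <;> ring
  simp only [this]
  rw [Finset.sum_add_distrib, Finset.sum_const, Finset.sum_ite_mem, Finset.univ_inter,
    Finset.sum_const, Finset.card_univ, Fintype.card_fin, nsmul_eq_mul, nsmul_eq_mul]
  ring

lemma T_card_le {n : ℕ} (T : Finset (Fin n)) : (T.card : ℝ) ≤ n := by
  have := Finset.card_le_card (Finset.subset_univ T)
  rw [Finset.card_univ, Fintype.card_fin] at this
  exact_mod_cast this

lemma tail_low {n m : ℕ} (hn : 0 < n) (U : Finset (Fin n)) {s : ℝ} (hs0 : 0 < s) (hs1 : s ≤ 1)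
    (a : ℕ) :
    Pr n m (fun σ => cnt m U σ ≤ a) ≤ (((n : ℝ) + (s - 1) * U.card) / n) ^ m / s ^ a := by
  have h := markov hn (fun x => if x ∈ U then s else 1)
    (fun x => by split <;> [exact hs0.le; norm_num])
    (fun σ => cnt m U σ ≤ a) (s ^ a) (by positivity)
    (fun σ hσ => by
      rw [prod_w]
      exact pow_le_pow_of_le_one hs0.le hs1 hσ)
  rwa [sum_w] at h

lemma tail_up {n m : ℕ} (hn : 0 < n) (V : Finset (Fin n)) {t : ℝ} (ht : 1 ≤ t) (a : ℕ) :
    Pr n m (fun σ => a + 1 ≤ cnt m V σ) ≤ (((n : ℝ) + (t - 1) * V.card) / n) ^ m / t ^ (a + 1) := by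
  have h := markov hn (fun x => if x ∈ V then t else 1)
    (fun x => by split <;> [linarith; norm_num])
    (fun σ => a + 1 ≤ cnt m V σ) (t ^ (a + 1)) (by positivity)
    (fun σ hσ => by
      rw [prod_w]
      exact pow_le_pow_right₀ ht hσ)
  rwa [sum_w] at h

lemma tail_ratio {n m : ℕ} (hn : 0 < n) (U V : Finset (Fin n)) (hUV : Disjoint U V)
    {t : ℝ} (ht : 1 ≤ t) :
    Pr n m (fun σ => cnt m U σ ≤ cnt m V σ)
      ≤ (((n : ℝ) + (t - 1) * V.card + (1 / t - 1) * U.card) / n) ^ m := by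
  have ht0 : 0 < t := lt_of_lt_of_le one_pos ht
  have h := markov hn (fun x => (if x ∈ V then t else 1) * (if x ∈ U then 1 / t else 1))
    (fun x => by positivity)
    (fun σ => cnt m U σ ≤ cnt m V σ) 1 one_pos
    (fun σ hσ => by
      rw [Finset.prod_mul_distrib, prod_w, prod_w, one_div, inv_pow, ← div_eq_mul_inv,
        le_div_iff₀ (by positivity), one_mul]
      exact pow_le_pow_right₀ ht hσ)
  rw [div_one] at h
  have hsum : ∑ x : Fin n, (if x ∈ V then t else 1) * (if x ∈ U then 1 / t else 1)
      = (n : ℝ) + (t - 1) * V.card + (1 / t - 1) * U.card := by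
    have hpt : ∀ x : Fin n, (if x ∈ V then t else 1) * (if x ∈ U then 1 / t else 1)
        = (if x ∈ V then t else 1) + (if x ∈ U then 1 / t else 1) - 1 := by
      intro x
      by_cases hv : x ∈ V <;> by_cases hu : x ∈ U
      · exact absurd (Finset.mem_inter.2 ⟨hu, hv⟩)
          (by rw [Finset.disjoint_iff_inter_eq_empty.1 hUV]; exact Finset.notMem_empty x)
      all_goals simp [hv, hu]
    simp only [hpt]
    rw [Finset.sum_sub_distrib, Finset.sum_add_distrib, sum_w, sum_w, Finset.sum_const,
      Finset.card_univ, Fintype.card_fin, nsmul_eq_mul]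
    ring
  rwa [hsum] at h

lemma pair_bd {n m l : ℕ} {δ : ℝ} (hδ0 : 0 < δ) (hδ1 : δ ≤ 1) (hn : 0 < n)
    (h2l : 2 * (l : ℝ) ≤ (1 - δ) * n)
    (U V : Finset (Fin n)) (hU : (n : ℝ) - l ≤ U.card) (hV : (V.card : ℝ) ≤ l)
    (hUV : Disjoint U V) :
    Pr n m (fun σ => cnt m U σ ≤ cnt m V σ) ≤ (1 - δ ^ 2 / 4) ^ m := by
  have hnR : (0:ℝ) < n := by exact_mod_cast hn
  have h := tail_ratio (m := m) (t := 1 + δ) hn U V hUV (by linarith)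
  refine le_trans h ?_
  have hUn : (U.card : ℝ) ≤ n := T_card_le U
  have hV0 : (0:ℝ) ≤ V.card := by positivity
  have h1δ : (0:ℝ) < 1 + δ := by linarith
  have hbase0 : (0:ℝ) ≤ ((n : ℝ) + ((1 + δ) - 1) * V.card + (1 / (1 + δ) - 1) * U.card) / n := by
    apply div_nonneg _ hnR.le
    have : 1 / (1 + δ) - 1 = -(δ / (1 + δ)) := by field_simp; ring
    rw [this]
    have hfrac : δ / (1 + δ) ≤ 1 := by
      rw [div_le_one h1δ]; linarith
    nlinarith [mul_le_mul hfrac (T_card_le U) (by positivity : (0:ℝ) ≤ (U.card:ℝ))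
      (by norm_num : (0:ℝ) ≤ 1), hV0, hδ0.le]
  have hbase : ((n : ℝ) + ((1 + δ) - 1) * V.card + (1 / (1 + δ) - 1) * U.card) / n
      ≤ 1 - δ ^ 2 / 4 := by
    rw [div_le_iff₀ hnR]
    have key : (1 + δ) * ((n : ℝ) + ((1 + δ) - 1) * V.card + (1 / (1 + δ) - 1) * U.card)
        ≤ (1 + δ) * ((1 - δ ^ 2 / 4) * n) := by
      have e1 : (1 + δ) * (1 / (1 + δ) - 1) = -δ := by field_simp; ring
      have hUl : (n : ℝ) - l ≤ U.card := hU
      nlinarith [mul_le_mul_of_nonneg_left hV (le_of_lt hδ0),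
        mul_le_mul_of_nonneg_left hUl (le_of_lt hδ0)]
    have := (mul_le_mul_iff_right₀ h1δ).1 key
    linarith
  exact pow_le_pow_left₀ hbase0 hbase m

lemma round_bd {n m l : ℕ} {η : ℝ} (hη0 : 0 < η) (hn6 : 6 ≤ n) (hl2 : 2 ≤ l) (hln : l + 1 ≤ n)
    (hηl : η * n ≤ l)
    (U : Finset (Fin n)) (hU : (l : ℝ) + 1 ≤ U.card)
    (s : Finset ℕ) (hs : s.card ≤ n) (T : ℕ → Finset (Fin n))
    (hT : ∀ i ∈ s, ((T i).card : ℝ) ≤ 2) (hdisj : ∀ i ∈ s, Disjoint U (T i)) :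
    Pr n m (fun σ => ∃ i ∈ s, cnt m U σ ≤ cnt m (T i) σ)
      ≤ 2 * Real.exp (-(η / 4)) ^ m + Real.exp (16 / η) * (1 - η / 20) ^ m
        + (3 * Real.exp (-4)) ^ m := by
  have hn : 0 < n := by omega
  have hnR : (0:ℝ) < n := by exact_mod_cast hn
  have hlR : (2:ℝ) ≤ l := by exact_mod_cast hl2
  have hUn : (U.card : ℝ) ≤ n := T_card_le U
  have hη1 : η ≤ 1 := by
    by_contra hc
    push_neg at hc
    have : (l:ℝ) ≤ n - 1 := by
      have : (l:ℝ) + 1 ≤ n := by exact_mod_cast hln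
      linarith
    nlinarith
  have hexp_pos : (0:ℝ) < Real.exp (-(η / 4)) ^ m := by positivity
  have hmid_pos : (0:ℝ) ≤ (1 - η / 20) ^ m := by
    apply pow_nonneg; linarith
  have hlast_pos : (0:ℝ) < (3 * Real.exp (-4)) ^ m := by positivity
  rcases le_or_gt (n : ℝ) (Real.exp (16 / η)) with hsmall | hlarge
  · -- small n : per-candidate ratio bound
    have step1 := Pr_biUnion hn s (fun i σ => cnt m U σ ≤ cnt m (T i) σ)
    have step2 : ∀ i ∈ s, Pr n m (fun σ => cnt m U σ ≤ cnt m (T i) σ) ≤ (1 - η / 20) ^ m := by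
      intro i hi
      have h := tail_ratio (m := m) (t := 5/4) hn U (T i) (hdisj i hi) (by norm_num)
      refine le_trans h ?_
      have hTi := hT i hi
      have hTi0 : (0:ℝ) ≤ (T i).card := by positivity
      have hbase0 : (0:ℝ) ≤ ((n:ℝ) + ((5:ℝ)/4 - 1) * (T i).card + (1/(5/4) - 1) * U.card) / n := by
        apply div_nonneg _ hnR.le
        nlinarith
      have hbase : ((n:ℝ) + ((5:ℝ)/4 - 1) * (T i).card + (1/(5/4) - 1) * U.card) / n
          ≤ 1 - η / 20 := by
        rw [div_le_iff₀ hnR]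
        nlinarith
      exact pow_le_pow_left₀ hbase0 hbase m
    refine le_trans step1 (le_trans (Finset.sum_le_sum step2) ?_)
    rw [Finset.sum_const, nsmul_eq_mul]
    have : (s.card : ℝ) * (1 - η / 20) ^ m ≤ Real.exp (16 / η) * (1 - η / 20) ^ m := by
      apply mul_le_mul_of_nonneg_right _ hmid_pos
      calc (s.card : ℝ) ≤ n := by exact_mod_cast hs
        _ ≤ Real.exp (16 / η) := hsmall
    linarith
  · -- large n : threshold split
    set a : ℕ := Nat.ceil (η * m / 4) with ha
    have haR : η * m / 4 ≤ (a : ℝ) := Nat.le_ceil _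
    have haR2 : (a : ℝ) ≤ η * m / 4 + 1 := le_of_lt (Nat.ceil_lt_add_one (by positivity))
    have hsplit := Pr_or hn (fun σ => ∃ i ∈ s, cnt m U σ ≤ cnt m (T i) σ)
      (fun σ => cnt m U σ ≤ a)
      (fun σ => ∃ i ∈ s, a + 1 ≤ cnt m (T i) σ)
      (fun σ hσ => by
        obtain ⟨i, hi, hle⟩ := hσ
        rcases le_or_gt (cnt m U σ) a with h | h
        · exact Or.inl h
        · exact Or.inr ⟨i, hi, by omega⟩)
    refine le_trans hsplit ?_
    have term1 : Pr n m (fun σ => cnt m U σ ≤ a) ≤ 2 * Real.exp (-(η / 4)) ^ m := by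
      have h := tail_low (m := m) (s := 1/2) hn U (by norm_num) (by norm_num) a
      refine le_trans h ?_
      have hbase0 : (0:ℝ) ≤ ((n:ℝ) + ((1:ℝ)/2 - 1) * U.card) / n := by
        apply div_nonneg _ hnR.le; nlinarith
      have hbase : ((n:ℝ) + ((1:ℝ)/2 - 1) * U.card) / n ≤ 1 - η / 2 := by
        rw [div_le_iff₀ hnR]; nlinarith
      have hb1 : (((n:ℝ) + ((1:ℝ)/2 - 1) * U.card) / n) ^ m ≤ (1 - η / 2) ^ m :=
        pow_le_pow_left₀ hbase0 hbase m
      have hhalf : ((1:ℝ)/2) ^ a = 1 / 2 ^ a := by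
        rw [div_pow, one_pow]
      rw [hhalf, div_div_eq_mul_div, div_one]
      have h2a : (2:ℝ) ^ a ≤ 2 * (2:ℝ) ^ (η * m / 4) := by
        have : (2:ℝ) ^ a = (2:ℝ) ^ ((a:ℕ):ℝ) := by
          rw [Real.rpow_natCast]
        rw [this]
        calc (2:ℝ) ^ ((a:ℕ):ℝ) ≤ (2:ℝ) ^ (η * m / 4 + 1) :=
              Real.rpow_le_rpow_of_exponent_le one_le_two haR2
          _ = 2 * (2:ℝ) ^ (η * m / 4) := by
              rw [Real.rpow_add (by norm_num), Real.rpow_one]; ring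
      have hem : (1 - η / 2) ^ m ≤ Real.exp (-(η / 2)) ^ m :=
        pow_le_pow_left₀ (by linarith) (by
          have := Real.add_one_le_exp (-(η / 2)); linarith) m
      calc (((n:ℝ) + ((1:ℝ)/2 - 1) * U.card) / n) ^ m * 2 ^ a
          ≤ Real.exp (-(η / 2)) ^ m * (2 * (2:ℝ) ^ (η * m / 4)) := by
            apply mul_le_mul (le_trans hb1 hem) h2a (by positivity) (by positivity)
        _ ≤ 2 * Real.exp (-(η / 4)) ^ m := by
            rw [← Real.exp_nat_mul, ← Real.exp_nat_mul]
            have h2rw : (2:ℝ) ^ (η * m / 4) = Real.exp (Real.log 2 * (η * m / 4)) :=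
              Real.rpow_def_of_pos (by norm_num) _
            rw [h2rw]
            have hcomb : Real.exp ((m:ℝ) * -(η / 2)) * (2 * Real.exp (Real.log 2 * (η * m / 4)))
                = 2 * Real.exp ((m:ℝ) * -(η / 2) + Real.log 2 * (η * m / 4)) := by
              rw [Real.exp_add]; ring
            rw [hcomb]
            have hlog2 : Real.log 2 ≤ 1 := by
              have := Real.log_two_lt_d9; linarith
            have hexp_mono : (m:ℝ) * -(η / 2) + Real.log 2 * (η * m / 4) ≤ (m:ℝ) * -(η / 4) := by
              have hm0 : (0:ℝ) ≤ η * m / 4 := by positivity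
              have := mul_le_mul_of_nonneg_right hlog2 hm0
              linarith
            exact mul_le_mul_of_nonneg_left (Real.exp_le_exp.2 hexp_mono) (by norm_num)
    have term2 : Pr n m (fun σ => ∃ i ∈ s, a + 1 ≤ cnt m (T i) σ) ≤ (3 * Real.exp (-4)) ^ m := by
      have step1 := Pr_biUnion hn s (fun i σ => a + 1 ≤ cnt m (T i) σ)
      have step2 : ∀ i ∈ s, Pr n m (fun σ => a + 1 ≤ cnt m (T i) σ)
          ≤ (3:ℝ) ^ m / (n:ℝ) ^ (a + 1) := by
        intro i hi
        have h := tail_up (m := m) (t := (n:ℝ)) hn (T i) (by exact_mod_cast hn) a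
        refine le_trans h ?_
        have hTi := hT i hi
        have hTi0 : (0:ℝ) ≤ (T i).card := by positivity
        have hbase0 : (0:ℝ) ≤ ((n:ℝ) + ((n:ℝ) - 1) * (T i).card) / n := by
          apply div_nonneg _ hnR.le; nlinarith
        have hbase : ((n:ℝ) + ((n:ℝ) - 1) * (T i).card) / n ≤ 3 := by
          rw [div_le_iff₀ hnR]; nlinarith
        gcongr
      refine le_trans step1 (le_trans (Finset.sum_le_sum step2) ?_)
      rw [Finset.sum_const, nsmul_eq_mul]
      have hna : Real.exp (4 * m) ≤ (n:ℝ) ^ a := by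
        have hlogn : 16 / η ≤ Real.log n := by
          rw [← Real.exp_log hnR] at hlarge
          exact le_of_lt ((Real.exp_lt_exp).1 hlarge)
        have hprod : (4:ℝ) * m ≤ (a:ℝ) * Real.log n := by
          have h1 : (4:ℝ) * m = (η * m / 4) * (16 / η) := by
            field_simp; ring
          rw [h1]
          apply mul_le_mul haR hlogn (by positivity) (by positivity)
        calc Real.exp (4 * m) ≤ Real.exp ((a:ℝ) * Real.log n) := Real.exp_le_exp.2 hprod
          _ = (n:ℝ) ^ a := by
            rw [mul_comm, Real.exp_mul, Real.exp_log hnR, Real.rpow_natCast]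
      have hfin : (s.card : ℝ) * ((3:ℝ) ^ m / (n:ℝ) ^ (a + 1)) ≤ (3 * Real.exp (-4)) ^ m := by
        have hn0 : (n:ℝ) ≠ 0 := ne_of_gt hnR
        have hstep : (s.card : ℝ) * ((3:ℝ) ^ m / (n:ℝ) ^ (a + 1)) ≤ (3:ℝ) ^ m / (n:ℝ) ^ a := by
          calc (s.card : ℝ) * ((3:ℝ) ^ m / (n:ℝ) ^ (a + 1))
              ≤ (n:ℝ) * ((3:ℝ) ^ m / (n:ℝ) ^ (a + 1)) := by
                gcongr
            _ = (3:ℝ) ^ m / (n:ℝ) ^ a := by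
                rw [pow_succ]
                field_simp
        refine le_trans hstep ?_
        rw [mul_pow, ← Real.exp_nat_mul]
        rw [div_le_iff₀ (by positivity)]
        have hone : (1:ℝ) ≤ Real.exp ((m:ℝ) * -4) * (n:ℝ) ^ a := by
          calc (1:ℝ) = Real.exp ((m:ℝ) * -4 + 4 * m) := by
                rw [show (m:ℝ) * -4 + 4 * m = 0 by ring, Real.exp_zero]
            _ = Real.exp ((m:ℝ) * -4) * Real.exp (4 * m) := Real.exp_add _ _
            _ ≤ Real.exp ((m:ℝ) * -4) * (n:ℝ) ^ a :=
                mul_le_mul_of_nonneg_left hna (Real.exp_pos _).le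
        calc (3:ℝ)^m = (3:ℝ)^m * 1 := by ring
          _ ≤ (3:ℝ)^m * (Real.exp ((m:ℝ) * -4) * (n:ℝ)^a) :=
              mul_le_mul_of_nonneg_left hone (by positivity)
          _ = 3 ^ m * Real.exp ((m:ℝ) * -4) * (n:ℝ) ^ a := by ring
      exact hfin
    linarith [term1, term2, mul_nonneg (Real.exp_pos (16 / η)).le hmid_pos]

lemma mem_Acl {n l x : ℕ} : x ∈ Acl n l ↔
    (1 ≤ x ∧ x ≤ l) ∨ ∃ j, (1 ≤ j ∧ j ≤ (n - 2 * l) / 2) ∧ l + 2 * j = x := by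
  simp [Acl, Finset.mem_union, Finset.mem_image, Finset.mem_Icc]

lemma mem_Bcl {n l x : ℕ} : x ∈ Bcl n l ↔ (1 ≤ x ∧ x ≤ n) ∧ x ∉ Acl n l := by
  simp [Bcl, Finset.mem_sdiff, Finset.mem_Icc]

lemma Tst_disj {n : ℕ} (S : Finset ℕ) {i i' : ℕ} (h : i ≠ i') :
    Disjoint (Tst n S i) (Tst n S i') := by
  rw [Finset.disjoint_left]
  intro x hx hx'
  simp only [Tst, Finset.mem_filter] at hx hx'
  exact h (hx.2 ▸ hx'.2)

section Sets
variable {n l : ℕ} (hn6 : 6 ≤ n) (hev : n % 2 = 0) (hl2 : 2 ≤ l) (h2l : 2 * l < n)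
include hn6 hev hl2 h2l

lemma TA1 : l + 1 ≤ (Tst n (Acl n l) 1).card := by
  apply le_card_votes (by omega) (by omega) (by omega)
  · exact mem_Acl.2 (Or.inl ⟨le_rfl, by omega⟩)
  · omega
  · intro t ht1 htg hmem
    rcases mem_Acl.1 hmem with h | ⟨j, hj, hje⟩
    · unfold bck at h; split_ifs at h <;> omega
    · unfold bck at hje; split_ifs at hje <;> omega

lemma TA_le : ∀ i ∈ (Acl n l).erase 1, (Tst n (Acl n l) i).card ≤ 2 := by
  intro i hi
  obtain ⟨hne, hiA⟩ := Finset.mem_erase.1 hi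
  rcases mem_Acl.1 hiA with h | ⟨j, hj, hje⟩
  · -- 2 ≤ i ≤ l : blocker i - 1
    refine le_trans (card_votes_le (c' := i - 1) (by omega)
      (mem_Acl.2 (Or.inl ⟨by omega, by omega⟩)) (by omega) (by omega) (by omega)) ?_
    unfold gapv; split_ifs <;> omega
  · -- i = l + 2j : blocker i - 2
    have hiA2 : i - 2 ∈ Acl n l := by
      rcases Nat.eq_or_lt_of_le hj.1 with h1 | h1
      · exact mem_Acl.2 (Or.inl ⟨by omega, by omega⟩)
      · exact mem_Acl.2 (Or.inr ⟨j - 1, ⟨by omega, by omega⟩, by omega⟩)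
    refine le_trans (card_votes_le (c' := i - 2) (by omega) hiA2
      (by omega) (by omega) (by omega)) ?_
    unfold gapv; split_ifs <;> omega

lemma TB1 : l + 1 ≤ (Tst n (Bcl n l) (l + 1)).card := by
  apply le_card_votes (by omega) (by omega) (by omega)
  · refine mem_Bcl.2 ⟨⟨by omega, by omega⟩, fun hmem => ?_⟩
    rcases mem_Acl.1 hmem with h | ⟨j, hj, hje⟩ <;> omega
  · omega
  · intro t ht1 htg hmem
    have hb : bck n (l + 1) t = l + 1 - t := by unfold bck; split_ifs <;> omega
    obtain ⟨-, hnotA⟩ := mem_Bcl.1 hmem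
    exact hnotA (mem_Acl.2 (Or.inl ⟨by omega, by omega⟩))

lemma TB_le : ∀ i ∈ (Bcl n l).erase (l + 1), (Tst n (Bcl n l) i).card ≤ 2 := by
  intro i hi
  obtain ⟨hne, hiB⟩ := Finset.mem_erase.1 hi
  obtain ⟨⟨hi1, hin⟩, hnotA⟩ := mem_Bcl.1 hiB
  have hgel : l + 1 ≤ i := by
    by_contra hc
    exact hnotA (mem_Acl.2 (Or.inl ⟨by omega, by omega⟩))
  have hge : l + 3 ≤ i := by
    rcases Nat.lt_or_ge i (l + 3) with h | h
    · exfalso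
      have : i = l + 2 := by omega
      exact hnotA (mem_Acl.2 (Or.inr ⟨1, ⟨le_rfl, by omega⟩, by omega⟩))
    · exact h
  rcases Nat.lt_or_ge (n - l) i with hcase1 | hcase2
  · -- i > n - l
    rcases Nat.eq_or_lt_of_le hcase1 with heq | hgt
    · -- i = n - l + 1 : blocker i - 2 = n - l - 1
      have hmemB : i - 2 ∈ Bcl n l := by
        refine mem_Bcl.2 ⟨⟨by omega, by omega⟩, fun hmem => ?_⟩
        rcases mem_Acl.1 hmem with h | ⟨j, hj, hje⟩ <;> omega
      refine le_trans (card_votes_le (c' := i - 2) (by omega) hmemB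
        (by omega) (by omega) (by omega)) ?_
      unfold gapv; split_ifs <;> omega
    · -- i ≥ n - l + 2 : blocker i - 1
      have hmemB : i - 1 ∈ Bcl n l := by
        refine mem_Bcl.2 ⟨⟨by omega, by omega⟩, fun hmem => ?_⟩
        rcases mem_Acl.1 hmem with h | ⟨j, hj, hje⟩ <;> omega
      refine le_trans (card_votes_le (c' := i - 1) (by omega) hmemB
        (by omega) (by omega) (by omega)) ?_
      unfold gapv; split_ifs <;> omega
  · -- l + 3 ≤ i ≤ n - l : blocker i - 2
    have hinA : ∀ j, 1 ≤ j → j ≤ (n - 2 * l) / 2 → l + 2 * j ≠ i := by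
      intro j h1 h2 hc
      exact hnotA (mem_Acl.2 (Or.inr ⟨j, ⟨h1, h2⟩, hc⟩))
    have hmemB : i - 2 ∈ Bcl n l := by
      refine mem_Bcl.2 ⟨⟨by omega, by omega⟩, fun hmem => ?_⟩
      rcases mem_Acl.1 hmem with h | ⟨j, hj, hje⟩
      · omega
      · exact hinA (j + 1) (by omega) (by omega) (by omega)
    refine le_trans (card_votes_le (c' := i - 2) (by omega) hmemB
      (by omega) (by omega) (by omega)) ?_
    unfold gapv; split_ifs <;> omega

lemma TP1 : n - l ≤ (Tst n {1, l + 1} 1).card := by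
  apply le_card_votes (by omega) (by omega) (by omega)
  · exact Finset.mem_insert_self 1 {l + 1}
  · omega
  · intro t ht1 htg hmem
    have hb : bck n 1 t = n + 1 - t := by unfold bck; split_ifs <;> omega
    rw [hb] at hmem
    rcases Finset.mem_insert.1 hmem with h | h
    · omega
    · rw [Finset.mem_singleton] at h; omega

lemma TP2 : (Tst n {1, l + 1} (l + 1)).card ≤ l := by
  refine le_trans (card_votes_le (c' := 1) (by omega)
    (Finset.mem_insert_self 1 {l + 1}) (by omega) (by omega) (by omega)) ?_
  unfold gapv; split_ifs <;> omega

lemma Acl_card : (Acl n l).card ≤ n := by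
  refine le_trans (Finset.card_le_card (fun x hx => ?_)) (by simp : (Finset.Icc 1 n).card ≤ n)
  rcases mem_Acl.1 hx with h | ⟨j, hj, hje⟩ <;> exact Finset.mem_Icc.2 (by omega)

lemma Bcl_card : (Bcl n l).card ≤ n := by
  refine le_trans (Finset.card_le_card (fun x hx => ?_)) (by simp : (Finset.Icc 1 n).card ≤ n)
  obtain ⟨⟨h1, h2⟩, -⟩ := mem_Bcl.1 hx
  exact Finset.mem_Icc.2 ⟨h1, h2⟩

end Sets

lemma one_sub_p1_le {n m l : ℕ} {η δ : ℝ} (hη0 : 0 < η) (hδ0 : 0 < δ) (hδ1 : δ ≤ 1)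
    (hn6 : 6 ≤ n) (hev : n % 2 = 0) (hl2 : 2 ≤ l) (h2l : 2 * l < n)
    (hηl : η * n ≤ l) (h2lδ : 2 * (l : ℝ) ≤ (1 - δ) * n) :
    1 - p1 n m l ≤
      2 * (2 * Real.exp (-(η / 4)) ^ m + Real.exp (16 / η) * (1 - η / 20) ^ m
        + (3 * Real.exp (-4)) ^ m) + (1 - δ ^ 2 / 4) ^ m := by
  have hn : 0 < n := by omega
  have hcontain : ∀ σ : Fin m → Fin n, ¬ Wins1 n l σ →
      (∃ i ∈ (Acl n l).erase 1,
        cnt m (Tst n (Acl n l) 1) σ ≤ cnt m (Tst n (Acl n l) i) σ) ∨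
      ((∃ i ∈ (Bcl n l).erase (l + 1),
        cnt m (Tst n (Bcl n l) (l + 1)) σ ≤ cnt m (Tst n (Bcl n l) i) σ) ∨
      (cnt m (Tst n {1, l + 1} 1) σ ≤ cnt m (Tst n {1, l + 1} (l + 1)) σ)) := by
    intro σ hnw
    by_contra hcon
    push_neg at hcon
    obtain ⟨hA, hB, h2⟩ := hcon
    apply hnw
    constructor
    · intro i hiA hine
      rw [Xi_eq_cnt, Xi_eq_cnt]
      exact hA i (Finset.mem_erase.2 ⟨hine, hiA⟩)
    · refine ⟨l + 1, ?_, ?_, ?_⟩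
      · refine mem_Bcl.2 ⟨⟨by omega, by omega⟩, fun hmem => ?_⟩
        rcases mem_Acl.1 hmem with h | ⟨j, hj, hje⟩ <;> omega
      · intro i hiB hine
        rw [Xi_eq_cnt, Xi_eq_cnt]
        exact hB i (Finset.mem_erase.2 ⟨hine, hiB⟩)
      · rw [Xi_eq_cnt, Xi_eq_cnt]
        exact h2
  set badA : (Fin m → Fin n) → Prop := fun σ =>
    ∃ i ∈ (Acl n l).erase 1, cnt m (Tst n (Acl n l) 1) σ ≤ cnt m (Tst n (Acl n l) i) σ
  set badB : (Fin m → Fin n) → Prop := fun σ =>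
    ∃ i ∈ (Bcl n l).erase (l + 1),
      cnt m (Tst n (Bcl n l) (l + 1)) σ ≤ cnt m (Tst n (Bcl n l) i) σ
  set bad2 : (Fin m → Fin n) → Prop := fun σ =>
    cnt m (Tst n {1, l + 1} 1) σ ≤ cnt m (Tst n {1, l + 1} (l + 1)) σ
  have hsplit : Pr n m (fun σ => ¬ Wins1 n l σ) ≤ Pr n m badA + (Pr n m badB + Pr n m bad2) := by
    refine le_trans (Pr_or hn _ badA (fun σ => badB σ ∨ bad2 σ) hcontain) ?_
    have := Pr_or hn (fun σ => badB σ ∨ bad2 σ) badB bad2 (fun σ h => h)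
    linarith
  have hbA : Pr n m badA ≤ 2 * Real.exp (-(η / 4)) ^ m
      + Real.exp (16 / η) * (1 - η / 20) ^ m + (3 * Real.exp (-4)) ^ m := by
    apply round_bd hη0 hn6 hl2 (by omega) hηl
    · exact_mod_cast TA1 hn6 hev hl2 h2l
    · exact le_trans (Finset.card_le_card (Finset.erase_subset _ _)) (Acl_card hn6 hev hl2 h2l)
    · intro i hi; exact_mod_cast TA_le hn6 hev hl2 h2l i hi
    · intro i hi
      exact Tst_disj _ (fun h => (Finset.mem_erase.1 hi).1 h.symm)
  have hbB : Pr n m badB ≤ 2 * Real.exp (-(η / 4)) ^ m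
      + Real.exp (16 / η) * (1 - η / 20) ^ m + (3 * Real.exp (-4)) ^ m := by
    apply round_bd hη0 hn6 hl2 (by omega) hηl
    · exact_mod_cast TB1 hn6 hev hl2 h2l
    · exact le_trans (Finset.card_le_card (Finset.erase_subset _ _)) (Bcl_card hn6 hev hl2 h2l)
    · intro i hi; exact_mod_cast TB_le hn6 hev hl2 h2l i hi
    · intro i hi
      exact Tst_disj _ (fun h => (Finset.mem_erase.1 hi).1 h.symm)
  have hb2 : Pr n m bad2 ≤ (1 - δ ^ 2 / 4) ^ m := by
    apply pair_bd hδ0 hδ1 hn h2lδ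
    · have h1 := TP1 hn6 hev hl2 h2l
      have h2 : ((n - l : ℕ) : ℝ) = (n : ℝ) - l := by
        have : l ≤ n := by omega
        push_cast [this]; ring
      rw [← h2]; exact_mod_cast h1
    · exact_mod_cast TP2 hn6 hev hl2 h2l
    · exact Tst_disj _ (by omega)
  have hcompl := Pr_compl hn (Wins1 n l (m := m))
  have : p1 n m l = Pr n m (Wins1 n l) := rfl
  linarith [hsplit, hbA, hbB, hb2]

/-- Universal convergence to victory: if `[η_min, η_max] ⊂ (0,1/2)`, `m_k → ∞`, `n_k ≥ 6` are
even, `2 ≤ l_k < n_k/2`, and `l_k/n_k ∈ [η_min, η_max]` for all `k`, then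
`p₁(n_k, m_k, l_k) → 1`. -/
theorem universal_convergence_to_victory (ηmin ηmax : ℝ)
    (hmin : 0 < ηmin) (hminmax : ηmin ≤ ηmax) (hmax : ηmax < 1 / 2)
    (mk nk lk : ℕ → ℕ)
    (hm : Tendsto mk atTop atTop)
    (hn : ∀ k, 6 ≤ nk k ∧ Even (nk k))
    (hl : ∀ k, 2 ≤ lk k ∧ 2 * lk k < nk k)
    (hratio : ∀ k, (lk k : ℝ) / (nk k : ℝ) ∈ Set.Icc ηmin ηmax) :
    Tendsto (fun k : ℕ => p1 (nk k) (mk k) (lk k)) atTop (nhds 1) := by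
  set η := ηmin with hηdef
  set δ := 1 - 2 * ηmax with hδdef
  have hη0 : 0 < η := hmin
  have hη1 : η < 1 / 2 := lt_of_le_of_lt hminmax hmax
  have hδ0 : 0 < δ := by rw [hδdef]; linarith
  have hδ1 : δ ≤ 1 := by rw [hδdef]; linarith
  set G : ℕ → ℝ := fun k =>
    2 * (2 * Real.exp (-(η / 4)) ^ mk k + Real.exp (16 / η) * (1 - η / 20) ^ mk k
      + (3 * Real.exp (-4)) ^ mk k) + (1 - δ ^ 2 / 4) ^ mk k with hGdef
  have hGk : ∀ k, 1 - p1 (nk k) (mk k) (lk k) ≤ G k := by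
    intro k
    have hnk := hn k
    have hlk := hl k
    have hrk := hratio k
    have hnR : (0:ℝ) < nk k := by
      have : (0:ℕ) < nk k := by omega
      exact_mod_cast this
    have hev : nk k % 2 = 0 := Nat.even_iff.1 hnk.2
    apply one_sub_p1_le hmin hδ0 hδ1 hnk.1 hev hlk.1 hlk.2
    · have h1 : η ≤ (lk k : ℝ) / (nk k : ℝ) := hrk.1
      rw [le_div_iff₀ hnR] at h1
      linarith
    · have h2 : (lk k : ℝ) / (nk k : ℝ) ≤ ηmax := hrk.2
      rw [div_le_iff₀ hnR] at h2
      rw [hδdef]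
      ring_nf
      ring_nf at h2
      linarith
  have hp1le : ∀ k, p1 (nk k) (mk k) (lk k) ≤ 1 := by
    intro k
    exact Pr_le_one (by have := (hn k).1; omega) _
  have tpow : ∀ ρ : ℝ, 0 ≤ ρ → ρ < 1 → Tendsto (fun k => ρ ^ mk k) atTop (nhds 0) :=
    fun ρ h0 h1 => (tendsto_pow_atTop_nhds_zero_of_lt_one h0 h1).comp hm
  have h1 := tpow (Real.exp (-(η / 4))) (Real.exp_pos _).le
    (Real.exp_lt_one_iff.2 (by linarith))
  have h2 := tpow (1 - η / 20) (by linarith) (by linarith)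
  have h3 : Tendsto (fun k => (3 * Real.exp (-4)) ^ mk k) atTop (nhds 0) := by
    apply tpow _ (by positivity)
    have he4 : (5:ℝ) ≤ Real.exp 4 := by
      have := Real.add_one_le_exp (4:ℝ); linarith
    have hpos := Real.exp_pos (-4 : ℝ)
    have : 3 * Real.exp (-4) < Real.exp 4 * Real.exp (-4) :=
      mul_lt_mul_of_pos_right (by linarith) hpos
    rwa [← Real.exp_add, show (4:ℝ) + -4 = 0 by ring, Real.exp_zero] at this
  have h4 := tpow (1 - δ ^ 2 / 4) (by nlinarith) (by nlinarith)
  have hG0 : Tendsto G atTop (nhds 0) := by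
    have := (((h1.const_mul (2:ℝ)).add (h2.const_mul (Real.exp (16 / η)))).add h3).const_mul
      (2:ℝ) |>.add h4
    simpa using this
  have hlow : Tendsto (fun k => 1 - G k) atTop (nhds 1) := by
    have hc : Tendsto (fun _ : ℕ => (1:ℝ)) atTop (nhds 1) := tendsto_const_nhds
    have := hc.sub hG0
    simpa using this
  refine tendsto_of_tendsto_of_tendsto_of_le_of_le hlow tendsto_const_nhds ?_ ?_
  · intro k
    have := hGk k
    simp only
    linarith
  · intro k
    exact hp1le k
end TwoRound
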